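/- With Ĩ the set of simple roots orthogonal to the highest root α̃, let w₀ be the longest element of W and w_Ĩ the longest element of W_Ĩ. Then w₀ w_Ĩ = w_Ĩ w₀ = s_α̃, the reflection in the highest root. -/

import Mathlib

open scoped RealInnerProductSpace

variable {V : Type*} [NormedAddCommGroup V] [InnerProductSpace ℝ V]

/-- An irreducible reduced (crystallographic) root system in a real inner product space. -/
structure IsIrredRootSystem (Φ : Set V) : Prop where
  finite : Φ.Finite
  nonempty : Φ.Nonempty
  nonzero : (0 : V) ∉ Φ
  spanning : Submodule.span ℝ Φ = ⊤
  reflect_mem : ∀ α ∈ Φ, ∀ β ∈ Φ, β - (2 * ⟪α, β⟫ / ⟪α, α⟫) • α ∈ Φ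
  crystallographic : ∀ α ∈ Φ, ∀ β ∈ Φ, ∃ n : ℤ, 2 * ⟪α, β⟫ / ⟪α, α⟫ = (n : ℝ)
  reduced : ∀ α ∈ Φ, ∀ t : ℝ, t • α ∈ Φ → t = 1 ∨ t = -1
  irreducible : ∀ Φ₁ Φ₂ : Set V, Φ₁ ∪ Φ₂ = Φ →
    (∀ α ∈ Φ₁, ∀ β ∈ Φ₂, ⟪α, β⟫ = 0) → Φ₁ = ∅ ∨ Φ₂ = ∅

/-- `Δ` is a base (system of simple roots) for `Φ`: it is contained in `Φ`, linearly
independent, and every root is an integral combination of `Δ` with coefficients all of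
the same sign. -/
def IsBase (Φ : Set V) (Δ : Finset V) : Prop :=
  (Δ : Set V) ⊆ Φ ∧ LinearIndependent ℝ (fun a : Δ => (a : V)) ∧
    ∀ γ ∈ Φ, ∃ c : V → ℤ, γ = ∑ α ∈ Δ, (c α : ℝ) • α ∧
      ((∀ α ∈ Δ, 0 ≤ c α) ∨ (∀ α ∈ Δ, c α ≤ 0))

/-- The positive roots with respect to the base `Δ`. -/
def posRoots (Φ : Set V) (Δ : Finset V) : Set V :=
  {γ ∈ Φ | ∃ c : V → ℕ, γ = ∑ α ∈ Δ, (c α : ℝ) • α}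

/-- The coroot `γ^∨ = 2γ/(γ|γ)` of a root `γ`. -/
noncomputable def coroot (γ : V) : V := (2 / ⟪γ, γ⟫) • γ

/-- The set of reflections in the roots of `Φ`, as linear automorphisms of `V`. -/
def reflections (Φ : Set V) : Set (V ≃ₗ[ℝ] V) :=
  {w | ∃ α ∈ Φ, ∀ v, w v = v - (2 * ⟪α, v⟫ / ⟪α, α⟫) • α}

/-- The Weyl group of `Φ`: the group generated by the reflections in the roots. -/
def weylGroup (Φ : Set V) : Subgroup (V ≃ₗ[ℝ] V) := Subgroup.closure (reflections Φ)

/-- The simple reflections with respect to the base `Δ`. -/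
def simpleReflections (Δ : Finset V) : Set (V ≃ₗ[ℝ] V) :=
  {w | ∃ α ∈ Δ, ∀ v, w v = v - (2 * ⟪α, v⟫ / ⟪α, α⟫) • α}

/-- The length of `w` with respect to the simple reflections determined by `Δ`. -/
noncomputable def len (Δ : Finset V) (w : V ≃ₗ[ℝ] V) : ℕ :=
  sInf {n | ∃ L : List (V ≃ₗ[ℝ] V),
    (∀ s ∈ L, s ∈ simpleReflections Δ) ∧ L.length = n ∧ L.prod = w}

/-- `t` is the highest root of `Φ` with respect to the base `Δ`. -/
def IsHighestRoot (Φ : Set V) (Δ : Finset V) (t : V) : Prop :=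
  t ∈ Φ ∧ ∀ α ∈ Φ, ∃ c : V → ℕ, t - α = ∑ a ∈ Δ, (c a : ℝ) • a

/-- The standard parabolic subgroup `W_I` generated by the reflections in the roots of
`I`. -/
def parabolic (I : Set V) : Subgroup (V ≃ₗ[ℝ] V) :=
  Subgroup.closure {w | ∃ α ∈ I, ∀ v, w v = v - (2 * ⟪α, v⟫ / ⟪α, α⟫) • α}

/-!
Let `N(w)` be the set of positive roots that `w` makes negative. For a product `w` of simple
reflections, `N(w s_a)` is `N(w)` with one root added or removed, and with the exchange condition
this gives `len w = |N(w)|`. Hence `w = 1` when `N(w) = ∅`, and an element of maximal length in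
`W_X` (`X ⊆ Δ`) sends every simple root in `X` to a negative root.

The highest root `t` is dominant, so `⟪t, β⟫ ≥ 0` for every positive root `β`, with equality only
if `β` is supported on `Ĩ`. If `⟪t, β⟫ = 0`, then `s_t β = β` and `w_Ĩ β < 0`; if `⟪t, β⟫ > 0`,
then `s_t β < 0` while `w_Ĩ`, which fixes `t`, keeps `-s_t β` positive. Since `w₀` makes every
positive root negative, `w₀ w_Ĩ s_t β > 0` in both cases, so `w₀ w_Ĩ = s_t`. Finally
`w_Ĩ w₀ = w_Ĩ s_t w_Ĩ⁻¹ = s_{w_Ĩ t} = s_t`.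
-/

namespace Weyl

noncomputable def reflection (α : V) : V ≃ₗ[ℝ] V :=
  (Submodule.reflection (ℝ ∙ α)ᗮ).toLinearEquiv

lemma reflection_apply (α v : V) : reflection α v = v - (2 * ⟪α, v⟫ / ⟪α, α⟫) • α := by
  rw [reflection, LinearIsometryEquiv.coe_toLinearEquiv, Submodule.reflection_orthogonal_apply,
    Submodule.reflection_singleton_apply, real_inner_self_eq_norm_sq]
  simp only [RCLike.ofReal_real_eq_id, id_eq]
  module

lemma reflection_inv (α : V) : (reflection α)⁻¹ = reflection α := rfl

lemma reflection_mul_self (α : V) : reflection α * reflection α = 1 :=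
  reflection_inv α ▸ mul_inv_cancel (reflection α)

lemma reflection_reflection (α v : V) : reflection α (reflection α v) = v :=
  Submodule.reflection_reflection _ v

lemma reflection_self (α : V) : reflection α α = -α :=
  Submodule.reflection_orthogonalComplement_singleton_eq_neg α

lemma reflection_neg (α : V) : reflection (-α) = reflection α :=
  LinearEquiv.ext fun v => by
    simp only [reflection_apply, inner_neg_left, inner_neg_right, neg_neg]; module

lemma reflection_of_inner_eq_zero {α v : V} (h : ⟪α, v⟫ = 0) : reflection α v = v := by
  simp [reflection_apply, h]

lemma inner_reflection_reflection (α u v : V) : ⟪reflection α u, reflection α v⟫ = ⟪u, v⟫ :=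
  LinearIsometryEquiv.inner_map_map _ u v

lemma inner_reflection_right (α v : V) : ⟪α, reflection α v⟫ = -⟪α, v⟫ := by
  rw [← inner_reflection_reflection α, reflection_self, reflection_reflection, inner_neg_left]

lemma reflection_conj {w : V ≃ₗ[ℝ] V} (hw : ∀ u v, ⟪w u, w v⟫ = ⟪u, v⟫) (α : V) :
    reflection (w α) = w * reflection α * w⁻¹ := by
  refine LinearEquiv.ext fun v => ?_
  obtain ⟨u, rfl⟩ := w.surjective v
  change _ = w (reflection α (w.symm (w u)))
  rw [w.symm_apply_apply, reflection_apply, reflection_apply, hw, hw, map_sub, map_smul]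

lemma reflection_reflection_apply_eq (α β : V) :
    reflection (reflection α β) = reflection α * reflection β * reflection α := by
  rw [reflection_conj (inner_reflection_reflection α), reflection_inv]

lemma setOf_eq_image_reflection (X : Set V) :
    {w : V ≃ₗ[ℝ] V | ∃ α ∈ X, ∀ v, w v = v - (2 * ⟪α, v⟫ / ⟪α, α⟫) • α} = reflection '' X := by
  ext w
  refine ⟨fun ⟨α, hα, h⟩ => ⟨α, hα, LinearEquiv.ext fun v => by rw [h, reflection_apply]⟩, ?_⟩
  rintro ⟨α, hα, rfl⟩
  exact ⟨α, hα, reflection_apply α⟩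

lemma reflections_eq (Φ : Set V) : reflections Φ = reflection '' Φ :=
  setOf_eq_image_reflection Φ

lemma simpleReflections_eq (Δ : Finset V) : simpleReflections Δ = reflection '' Δ :=
  setOf_eq_image_reflection (Δ : Set V)

lemma parabolic_eq (I : Set V) : parabolic I = Subgroup.closure (reflection '' I) := by
  rw [parabolic, setOf_eq_image_reflection]

lemma reflection_mem {Φ : Set V} (hΦ : IsIrredRootSystem Φ) {α β : V} (hα : α ∈ Φ)
    (hβ : β ∈ Φ) : reflection α β ∈ Φ :=
  reflection_apply α β ▸ hΦ.reflect_mem α hα β hβ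

lemma neg_mem {Φ : Set V} (hΦ : IsIrredRootSystem Φ) {α : V} (hα : α ∈ Φ) : -α ∈ Φ :=
  reflection_self α ▸ reflection_mem hΦ hα hα

section Closure

variable {X : Set V} {w : V ≃ₗ[ℝ] V}

lemma exists_prod_eq_of_mem_closure (hw : w ∈ Subgroup.closure (reflection '' X)) :
    ∃ L : List (V ≃ₗ[ℝ] V), (∀ s ∈ L, s ∈ reflection '' X) ∧ L.prod = w := by
  have hinv : (reflection '' X)⁻¹ ⊆ reflection '' X := by
    rintro s ⟨α, hα, hs⟩
    exact ⟨α, hα, by rw [← inv_inv s, ← hs, reflection_inv]⟩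
  rw [← Subgroup.mem_toSubmonoid, Subgroup.closure_toSubmonoid,
    Set.union_eq_left.2 hinv] at hw
  exact Submonoid.exists_list_of_mem_closure hw

lemma inner_map_map_of_mem_closure (hw : w ∈ Subgroup.closure (reflection '' X)) (u v : V) :
    ⟪w u, w v⟫ = ⟪u, v⟫ := by
  induction hw using Subgroup.closure_induction'' generalizing u v with
  | mem _ hs | inv_mem _ hs =>
    obtain ⟨α, -, rfl⟩ := hs
    exact inner_reflection_reflection α u v
  | one => rfl
  | mul x y _ _ hx hy => exact (hx _ _).trans (hy u v)

lemma apply_eq_self_of_mem_closure {v : V} (hX : ∀ α ∈ X, ⟪α, v⟫ = 0)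
    (hw : w ∈ Subgroup.closure (reflection '' X)) : w v = v := by
  induction hw using Subgroup.closure_induction'' with
  | mem _ hs | inv_mem _ hs =>
    obtain ⟨α, hα, rfl⟩ := hs
    exact reflection_of_inner_eq_zero (hX α hα)
  | one => rfl
  | mul x y _ _ hx hy => exact (congrArg x hy).trans hx

lemma apply_mem_of_mem_closure {Φ : Set V} (hΦ : IsIrredRootSystem Φ) (hX : X ⊆ Φ)
    (hw : w ∈ Subgroup.closure (reflection '' X)) {γ : V} (hγ : γ ∈ Φ) : w γ ∈ Φ := by
  induction hw using Subgroup.closure_induction'' generalizing γ with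
  | mem _ hs | inv_mem _ hs =>
    obtain ⟨α, hα, rfl⟩ := hs
    exact reflection_mem hΦ (hX hα) hγ
  | one => exact hγ
  | mul x y _ _ hx hy => exact hx (hy hγ)

end Closure

section Cone

variable {ι : Type*} (b : Module.Basis ι ℝ V)

/-- On roots, this is positivity with respect to the base `{b i}`. -/
def IsPos (v : V) : Prop := ∀ i, 0 ≤ b.repr v i

variable {b}

lemma eq_zero_of_isPos_of_isPos_neg {v : V} (h : IsPos b v) (hneg : IsPos b (-v)) : v = 0 :=
  b.ext_elem_iff.2 fun i => by
    have := hneg i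
    simp only [map_neg, Finsupp.neg_apply, Left.nonneg_neg_iff, map_zero,
      Finsupp.coe_zero, Pi.zero_apply] at this ⊢
    exact le_antisymm this (h i)

lemma not_isPos_neg_of_isPos {Φ : Set V} (hΦ : IsIrredRootSystem Φ) {γ : V} (hγ : γ ∈ Φ)
    (h : IsPos b γ) : ¬ IsPos b (-γ) := fun hneg =>
  hΦ.nonzero (eq_zero_of_isPos_of_isPos_neg h hneg ▸ hγ)

lemma not_isPos_neg_apply_of_isPos {Φ : Set V} (hΦ : IsIrredRootSystem Φ) (w : V ≃ₗ[ℝ] V)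
    {γ : V} (hγ : γ ∈ Φ) (h : IsPos b (w γ)) : ¬ IsPos b (-w γ) := fun hneg =>
  hΦ.nonzero (w.map_eq_zero_iff.1 (eq_zero_of_isPos_of_isPos_neg h hneg) ▸ hγ)

variable [Fintype ι]

lemma inner_eq_sum_repr (t v : V) : ⟪t, v⟫ = ∑ i, b.repr v i * ⟪t, b i⟫ := by
  conv_lhs => rw [← b.sum_repr v]
  simp only [inner_sum, real_inner_smul_right]

lemma inner_nonneg_of_isPos {t v : V} (ht : ∀ i, 0 ≤ ⟪t, b i⟫) (hv : IsPos b v) :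
    0 ≤ ⟪t, v⟫ :=
  inner_eq_sum_repr (b := b) t v ▸ Finset.sum_nonneg fun i _ => mul_nonneg (hv i) (ht i)

lemma inner_eq_zero_of_repr_ne_zero {t v : V} (ht : ∀ i, 0 ≤ ⟪t, b i⟫) (hv : IsPos b v)
    (h0 : ⟪t, v⟫ = 0) {i : ι} (hi : b.repr v i ≠ 0) : ⟪t, b i⟫ = 0 := by
  rw [inner_eq_sum_repr (b := b)] at h0
  have := (Finset.sum_eq_zero_iff_of_nonneg fun j _ => mul_nonneg (hv j) (ht j)).1 h0 i
    (Finset.mem_univ i)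
  exact (mul_eq_zero.1 this).resolve_left hi

lemma exists_inner_pos_of_isPos {v : V} (hv : IsPos b v) (h0 : v ≠ 0) :
    ∃ i, 0 < ⟪v, b i⟫ := by
  by_contra! h
  have : ⟪v, v⟫ ≤ 0 := inner_eq_sum_repr (b := b) v v ▸
    Finset.sum_nonpos fun i _ => mul_nonpos_of_nonneg_of_nonpos (hv i) (h i)
  exact h0 (real_inner_self_nonpos.1 this)

lemma isPos_neg_apply {F : Type*} [FunLike F V V] [LinearMapClass F ℝ V V] (f : F) {v : V}
    (hv : IsPos b v) (h : ∀ i, b.repr v i ≠ 0 → IsPos b (-f (b i))) : IsPos b (-f v) := by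
  intro j
  rw [← b.sum_repr v, map_sum, ← Finset.sum_neg_distrib, map_sum, Finsupp.coe_finsetSum,
    Finset.sum_apply]
  refine Finset.sum_nonneg fun i _ => ?_
  by_cases hi : b.repr v i = 0
  · simp [hi]
  · have := mul_nonneg (hv i) (h i hi j)
    simpa only [map_smul, ← smul_neg, Finsupp.smul_apply, smul_eq_mul] using this

end Cone

section Base

variable {Φ : Set V} {Δ : Finset V} {b : Module.Basis Δ ℝ V}

lemma span_eq_top_of_isBase (hΦ : IsIrredRootSystem Φ) (hΔ : IsBase Φ Δ) :
    Submodule.span ℝ (Δ : Set V) = ⊤ := by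
  refine top_unique (hΦ.spanning ▸ Submodule.span_le.2 fun γ hγ => ?_)
  obtain ⟨c, rfl, -⟩ := hΔ.2.2 γ hγ
  exact Submodule.sum_mem _ fun α hα => Submodule.smul_mem _ _ (Submodule.subset_span hα)

lemma repr_sum_smul (hb : ∀ a, b a = a) (c : V → ℝ) (a : Δ) :
    b.repr (∑ α ∈ Δ, c α • α) a = c a := by
  have : ∑ α ∈ Δ, c α • α = ∑ i : Δ, c i • b i := by
    rw [← Finset.sum_coe_sort Δ]
    simp only [hb]
  rw [this, b.repr_sum_self]

lemma repr_of_mem (hb : ∀ a, b a = a) {a : V} (ha : a ∈ Δ) :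
    b.repr a = Finsupp.single ⟨a, ha⟩ 1 := by
  rw [← b.repr_self, hb]

lemma isPos_of_mem (hb : ∀ a, b a = a) {a : V} (ha : a ∈ Δ) : IsPos b a := by
  classical
  intro i
  rw [repr_of_mem hb ha, Finsupp.single_apply]
  split_ifs <;> norm_num

lemma repr_reflection_of_mem (hb : ∀ a, b a = a) {a : V} (ha : a ∈ Δ) (v : V) :
    b.repr (reflection a v) = b.repr v - (2 * ⟪a, v⟫ / ⟪a, a⟫) • Finsupp.single ⟨a, ha⟩ 1 := by
  rw [reflection_apply, map_sub, map_smul, repr_of_mem hb ha]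

lemma sum_repr_reflection_lt (hb : ∀ a, b a = a) {a v : V} (ha : a ∈ Δ) (hv : 0 < ⟪a, v⟫) :
    ∑ i, b.repr (reflection a v) i < ∑ i, b.repr v i := by
  classical
  have hk : 0 < 2 * ⟪a, v⟫ / ⟪a, a⟫ := by
    have := real_inner_self_pos.2 fun h : a = 0 => by simp [h] at hv
    positivity
  refine Finset.sum_lt_sum (fun i _ => ?_) ⟨⟨a, ha⟩, Finset.mem_univ _, ?_⟩ <;>
    rw [repr_reflection_of_mem hb ha, Finsupp.sub_apply, Finsupp.smul_apply, smul_eq_mul,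
      Finsupp.single_apply]
  · rw [sub_le_self_iff]
    exact mul_nonneg hk.le (by split_ifs <;> norm_num)
  · rw [if_pos rfl, mul_one, sub_lt_self_iff]
    exact hk

lemma isPos_or_isPos_neg (hΔ : IsBase Φ Δ) (hb : ∀ a, b a = a) {γ : V} (hγ : γ ∈ Φ) :
    IsPos b γ ∨ IsPos b (-γ) := by
  obtain ⟨c, rfl, hc | hc⟩ := hΔ.2.2 γ hγ
  · exact Or.inl fun a => by rw [repr_sum_smul hb]; exact_mod_cast hc a a.2
  · refine Or.inr fun a => ?_
    rw [map_neg, Finsupp.neg_apply, repr_sum_smul hb, Left.nonneg_neg_iff]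
    exact_mod_cast hc a a.2

lemma isPos_reflection_of_ne (hΦ : IsIrredRootSystem Φ) (hΔ : IsBase Φ Δ) (hb : ∀ a, b a = a)
    {a β : V} (ha : a ∈ Δ) (hβΦ : β ∈ Φ) (hβ : IsPos b β) (hne : β ≠ a) :
    IsPos b (reflection a β) := by
  classical
  have hcoord : ∀ i ≠ ⟨a, ha⟩, b.repr (reflection a β) i = b.repr β i := fun i hi => by
    simp [repr_reflection_of_mem hb ha, Ne.symm hi]
  -- `β` is not a multiple of `a`, so some other coordinate of `β` is positive
  obtain ⟨i, hi, hpos⟩ : ∃ i ≠ ⟨a, ha⟩, 0 < b.repr β i := by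
    by_contra! h
    have hβa : β = b.repr β ⟨a, ha⟩ • a := b.ext_elem_iff.2 fun i => by
      rw [map_smul, repr_of_mem hb ha, Finsupp.smul_apply, Finsupp.single_apply]
      split_ifs with hi
      · rw [← hi, smul_eq_mul, mul_one]
      · rw [smul_zero]; exact le_antisymm (h i (Ne.symm hi)) (hβ i)
    rcases hΦ.reduced a (hΔ.1 ha) _ (hβa ▸ hβΦ) with h1 | h1
    · exact hne (by rw [hβa, h1, one_smul])
    · linarith [hβ ⟨a, ha⟩]
  refine (isPos_or_isPos_neg hΔ hb (reflection_mem hΦ (hΔ.1 ha) hβΦ)).resolve_right fun hneg => ?_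
  have := hneg i
  rw [map_neg, Finsupp.neg_apply, hcoord i hi] at this
  linarith

lemma isPos_or_isPos_neg_apply (hΦ : IsIrredRootSystem Φ) (hΔ : IsBase Φ Δ) (hb : ∀ a, b a = a)
    {w : V ≃ₗ[ℝ] V} (hw : w ∈ Subgroup.closure (reflection '' Δ)) {γ : V} (hγ : γ ∈ Φ) :
    IsPos b (w γ) ∨ IsPos b (-w γ) :=
  isPos_or_isPos_neg hΔ hb (apply_mem_of_mem_closure hΦ hΔ.1 hw hγ)

end Base

/-- The inversion set `N(w) = {β ∈ Φ⁺ | w β < 0}`. -/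
def invSet {ι : Type*} (Φ : Set V) (b : Module.Basis ι ℝ V) (w : V ≃ₗ[ℝ] V) : Set V :=
  {β ∈ Φ | IsPos b β ∧ IsPos b (-w β)}

noncomputable def nInv {ι : Type*} (Φ : Set V) (b : Module.Basis ι ℝ V) (w : V ≃ₗ[ℝ] V) : ℕ :=
  (invSet Φ b w).ncard

section Inversions

variable {Φ : Set V} {Δ : Finset V} {b : Module.Basis Δ ℝ V} {w : V ≃ₗ[ℝ] V} {a : V}

lemma invSet_eq_empty_of_forall_isPos (hΦ : IsIrredRootSystem Φ)
    (h : ∀ β ∈ Φ, IsPos b β → IsPos b (w β)) : invSet Φ b w = ∅ :=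
  Set.eq_empty_of_forall_notMem fun β ⟨hβΦ, hβ, hneg⟩ =>
    not_isPos_neg_apply_of_isPos hΦ w hβΦ (h β hβΦ hβ) hneg

lemma invSet_mul_reflection (hΦ : IsIrredRootSystem Φ) (hΔ : IsBase Φ Δ) (hb : ∀ a, b a = a)
    (ha : a ∈ Δ) (hwa : IsPos b (w a)) :
    invSet Φ b (w * reflection a) = insert a (reflection a '' invSet Φ b w) := by
  ext β
  constructor
  · rintro ⟨hβΦ, hβ, hneg⟩
    by_cases hβa : β = a
    · exact Or.inl hβa
    · exact Or.inr ⟨reflection a β, ⟨reflection_mem hΦ (hΔ.1 ha) hβΦ,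
        isPos_reflection_of_ne hΦ hΔ hb ha hβΦ hβ hβa, hneg⟩, reflection_reflection a β⟩
  · rintro (rfl | ⟨γ, ⟨hγΦ, hγ, hneg⟩, rfl⟩)
    · refine ⟨hΔ.1 ha, isPos_of_mem hb ha, ?_⟩
      rwa [LinearEquiv.mul_apply, reflection_self, map_neg, neg_neg]
    · have hγa : γ ≠ a := by
        rintro rfl
        exact not_isPos_neg_apply_of_isPos hΦ w hγΦ hwa hneg
      refine ⟨reflection_mem hΦ (hΔ.1 ha) hγΦ, isPos_reflection_of_ne hΦ hΔ hb ha hγΦ hγ hγa, ?_⟩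
      rwa [LinearEquiv.mul_apply, reflection_reflection]

lemma nInv_mul_reflection_of_isPos (hΦ : IsIrredRootSystem Φ) (hΔ : IsBase Φ Δ)
    (hb : ∀ a, b a = a) (ha : a ∈ Δ) (hwa : IsPos b (w a)) :
    nInv Φ b (w * reflection a) = nInv Φ b w + 1 := by
  have hnotMem : a ∉ reflection a '' invSet Φ b w := by
    rintro ⟨γ, ⟨-, hγ, -⟩, hγa⟩
    rw [← reflection_reflection a γ, hγa, reflection_self] at hγ
    exact not_isPos_neg_of_isPos hΦ (hΔ.1 ha) (isPos_of_mem hb ha) hγ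
  have hfin : (invSet Φ b w).Finite := hΦ.finite.subset fun β hβ => hβ.1
  rw [nInv, invSet_mul_reflection hΦ hΔ hb ha hwa, Set.ncard_insert_of_notMem hnotMem
    (hfin.image _), Set.ncard_image_of_injective _ (reflection a).injective, nInv]

lemma nInv_mul_reflection_of_isPos_neg (hΦ : IsIrredRootSystem Φ) (hΔ : IsBase Φ Δ)
    (hb : ∀ a, b a = a) (ha : a ∈ Δ) (hwa : IsPos b (-w a)) :
    nInv Φ b w = nInv Φ b (w * reflection a) + 1 := by
  have h := nInv_mul_reflection_of_isPos hΦ hΔ hb (w := w * reflection a) ha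
    (by rwa [LinearEquiv.mul_apply, reflection_self, map_neg])
  rwa [mul_assoc, reflection_mul_self, mul_one] at h

end Inversions

section Words

variable {Φ : Set V} {Δ : Finset V} {b : Module.Basis Δ ℝ V} {L : List (V ≃ₗ[ℝ] V)}

lemma prod_mem_closure (hL : ∀ s ∈ L, s ∈ reflection '' Δ) :
    L.prod ∈ Subgroup.closure (reflection '' Δ) :=
  list_prod_mem fun s hs => Subgroup.subset_closure (hL s hs)

lemma nInv_prod_le_length (hΦ : IsIrredRootSystem Φ) (hΔ : IsBase Φ Δ) (hb : ∀ a, b a = a)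
    (hL : ∀ s ∈ L, s ∈ reflection '' Δ) : nInv Φ b L.prod ≤ L.length := by
  induction L using List.reverseRecOn with
  | nil =>
    simp [nInv, invSet_eq_empty_of_forall_isPos hΦ (w := 1) fun β _ hβ => hβ]
  | append_singleton M s ih =>
    obtain ⟨a, ha, rfl⟩ := hL s (by simp)
    have hM : ∀ s ∈ M, s ∈ reflection '' Δ := fun s hs => hL s (by simp [hs])
    have := ih hM
    rw [List.prod_append, List.prod_singleton, List.length_append, List.length_singleton]
    rcases isPos_or_isPos_neg_apply hΦ hΔ hb (prod_mem_closure hM) (hΔ.1 ha) with h | h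
    · rw [nInv_mul_reflection_of_isPos hΦ hΔ hb ha h]; omega
    · have := nInv_mul_reflection_of_isPos_neg hΦ hΔ hb ha h; omega

/-- The exchange condition. -/
lemma exists_shorter_prod_eq_mul_reflection (hΦ : IsIrredRootSystem Φ) (hΔ : IsBase Φ Δ)
    (hb : ∀ a, b a = a) (hL : ∀ s ∈ L, s ∈ reflection '' Δ) {a : V} (ha : a ∈ Δ)
    (hneg : IsPos b (-L.prod a)) :
    ∃ L' : List (V ≃ₗ[ℝ] V), (∀ s ∈ L', s ∈ reflection '' Δ) ∧ L'.length < L.length ∧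
      L'.prod = L.prod * reflection a := by
  induction L with
  | nil => exact absurd hneg (not_isPos_neg_of_isPos hΦ (hΔ.1 ha) (isPos_of_mem hb ha))
  | cons s M ih =>
    obtain ⟨c, hc, rfl⟩ := hL s List.mem_cons_self
    have hM : ∀ s ∈ M, s ∈ reflection '' Δ := fun s hs => hL s (List.mem_cons_of_mem _ hs)
    rw [List.prod_cons, LinearEquiv.mul_apply] at hneg
    rcases isPos_or_isPos_neg_apply hΦ hΔ hb (prod_mem_closure hM) (hΔ.1 ha) with h | h
    · -- `s_c` turns the positive root `M.prod a` negative, which forces `M.prod a = c`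
      have hMaΦ := apply_mem_of_mem_closure hΦ hΔ.1 (prod_mem_closure hM) (hΔ.1 ha)
      have hMa : M.prod a = c := by
        by_contra hne
        exact not_isPos_neg_of_isPos hΦ (reflection_mem hΦ (hΔ.1 hc) hMaΦ)
          (isPos_reflection_of_ne hΦ hΔ hb hc hMaΦ h hne) hneg
      refine ⟨M, hM, by simp, ?_⟩
      rw [List.prod_cons, ← hMa,
        reflection_conj (inner_map_map_of_mem_closure (prod_mem_closure hM)),
        inv_mul_cancel_right, mul_assoc, reflection_mul_self, mul_one]
    · obtain ⟨M', hM', hlen, hprod⟩ := ih hM h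
      refine ⟨reflection c :: M', ?_, by simpa using hlen, by rw [List.prod_cons, List.prod_cons,
        hprod, mul_assoc]⟩
      exact List.forall_mem_cons.2 ⟨⟨c, hc, rfl⟩, hM'⟩

lemma exists_descent_of_nInv_lt_length (hΦ : IsIrredRootSystem Φ) (hΔ : IsBase Φ Δ)
    (hb : ∀ a, b a = a) (hL : ∀ s ∈ L, s ∈ reflection '' Δ) (hlt : nInv Φ b L.prod < L.length) :
    ∃ A a B, a ∈ Δ ∧ L = A ++ reflection a :: B ∧ IsPos b (-A.prod a) := by
  induction L using List.reverseRecOn with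
  | nil => simp at hlt
  | append_singleton M s ih =>
    obtain ⟨a, ha, rfl⟩ := hL s (by simp)
    have hM : ∀ s ∈ M, s ∈ reflection '' Δ := fun s hs => hL s (by simp [hs])
    rcases isPos_or_isPos_neg_apply hΦ hΔ hb (prod_mem_closure hM) (hΔ.1 ha) with h | h
    · rw [List.prod_append, List.prod_singleton, nInv_mul_reflection_of_isPos hΦ hΔ hb ha h,
        List.length_append, List.length_singleton] at hlt
      obtain ⟨A, c, B, hc, rfl, hneg⟩ := ih hM (by omega)
      exact ⟨A, c, B ++ [reflection a], hc, by simp, hneg⟩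
    · exact ⟨M, a, [], ha, rfl, h⟩

/-- The deletion condition. -/
lemma exists_shorter_prod_eq_of_nInv_lt_length (hΦ : IsIrredRootSystem Φ) (hΔ : IsBase Φ Δ)
    (hb : ∀ a, b a = a) (hL : ∀ s ∈ L, s ∈ reflection '' Δ) (hlt : nInv Φ b L.prod < L.length) :
    ∃ L' : List (V ≃ₗ[ℝ] V), (∀ s ∈ L', s ∈ reflection '' Δ) ∧ L'.length < L.length ∧
      L'.prod = L.prod := by
  obtain ⟨A, a, B, ha, rfl, hneg⟩ := exists_descent_of_nInv_lt_length hΦ hΔ hb hL hlt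
  obtain ⟨A', hA', hlen, hprod⟩ :=
    exists_shorter_prod_eq_mul_reflection hΦ hΔ hb (fun s hs => hL s (by simp [hs])) ha hneg
  refine ⟨A' ++ B, ?_, by simp; omega, by simp [hprod, mul_assoc]⟩
  simp only [List.mem_append]
  rintro s (hs | hs)
  exacts [hA' s hs, hL s (by simp [hs])]

end Words

section Length

variable {Φ : Set V} {Δ : Finset V} {b : Module.Basis Δ ℝ V} {w : V ≃ₗ[ℝ] V}

lemma exists_prod_eq_length_eq_len (hw : w ∈ Subgroup.closure (reflection '' Δ)) :
    ∃ L : List (V ≃ₗ[ℝ] V), (∀ s ∈ L, s ∈ reflection '' Δ) ∧ L.length = len Δ w ∧ L.prod = w := by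
  obtain ⟨L, hL, hprod⟩ := exists_prod_eq_of_mem_closure hw
  obtain ⟨L', hL', hlen, hprod'⟩ := Nat.sInf_mem (s := {n | ∃ L : List (V ≃ₗ[ℝ] V),
    (∀ s ∈ L, s ∈ simpleReflections Δ) ∧ L.length = n ∧ L.prod = w})
    ⟨L.length, L, simpleReflections_eq Δ ▸ hL, rfl, hprod⟩
  exact ⟨L', simpleReflections_eq Δ ▸ hL', hlen, hprod'⟩

lemma len_prod_le_length {L : List (V ≃ₗ[ℝ] V)} (hL : ∀ s ∈ L, s ∈ reflection '' Δ) :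
    len Δ L.prod ≤ L.length :=
  Nat.sInf_le ⟨L, simpleReflections_eq Δ ▸ hL, rfl, rfl⟩

lemma len_eq_nInv (hΦ : IsIrredRootSystem Φ) (hΔ : IsBase Φ Δ) (hb : ∀ a, b a = a)
    (hw : w ∈ Subgroup.closure (reflection '' Δ)) : len Δ w = nInv Φ b w := by
  obtain ⟨L, hL, hlen, rfl⟩ := exists_prod_eq_length_eq_len hw
  refine le_antisymm (not_lt.1 fun hlt => ?_) (hlen ▸ nInv_prod_le_length hΦ hΔ hb hL)
  obtain ⟨L', hL', hshorter, hprod⟩ :=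
    exists_shorter_prod_eq_of_nInv_lt_length hΦ hΔ hb hL (hlen ▸ hlt)
  have := hprod ▸ len_prod_le_length hL'
  omega

lemma eq_one_of_forall_isPos (hΦ : IsIrredRootSystem Φ) (hΔ : IsBase Φ Δ) (hb : ∀ a, b a = a)
    (hw : w ∈ Subgroup.closure (reflection '' Δ)) (h : ∀ β ∈ Φ, IsPos b β → IsPos b (w β)) :
    w = 1 := by
  obtain ⟨L, -, hlen, rfl⟩ := exists_prod_eq_length_eq_len hw
  rw [len_eq_nInv hΦ hΔ hb hw, nInv, invSet_eq_empty_of_forall_isPos hΦ h,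
    Set.ncard_empty, List.length_eq_zero_iff] at hlen
  rw [hlen, List.prod_nil]

lemma isPos_neg_apply_of_forall_len_le (hΦ : IsIrredRootSystem Φ) (hΔ : IsBase Φ Δ)
    (hb : ∀ a, b a = a) {X : Set V} (hX : X ⊆ Δ) (hw : w ∈ Subgroup.closure (reflection '' X))
    (hmax : ∀ w' ∈ Subgroup.closure (reflection '' X), len Δ w' ≤ len Δ w) {β : V}
    (hβ : IsPos b β) (hsupp : ∀ a : Δ, b.repr β a ≠ 0 → (a : V) ∈ X) : IsPos b (-w β) := by
  have hXΔ : Subgroup.closure (reflection '' X) ≤ Subgroup.closure (reflection '' Δ) :=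
    Subgroup.closure_mono (Set.image_mono hX)
  refine isPos_neg_apply w hβ fun a ha0 => ?_
  rw [hb]
  refine (isPos_or_isPos_neg_apply hΦ hΔ hb (hXΔ hw) (hΔ.1 a.2)).resolve_left fun hpos => ?_
  have hmul := mul_mem hw (Subgroup.subset_closure ⟨a, hsupp a ha0, rfl⟩)
  have := hmax _ hmul
  rw [len_eq_nInv hΦ hΔ hb (hXΔ hmul), len_eq_nInv hΦ hΔ hb (hXΔ hw),
    nInv_mul_reflection_of_isPos hΦ hΔ hb a.2 hpos] at this
  omega

end Length

section Generation

variable {Φ : Set V} {Δ : Finset V} {b : Module.Basis Δ ℝ V}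

lemma reflection_mem_closure_of_isPos (hΦ : IsIrredRootSystem Φ) (hΔ : IsBase Φ Δ)
    (hb : ∀ a, b a = a) {β : V} (hβΦ : β ∈ Φ) (hβ : IsPos b β) :
    reflection β ∈ Subgroup.closure (reflection '' Δ) := by
  by_contra hβW
  -- a counterexample `γ` of minimal height, lowered by a simple reflection, gives a smaller one
  obtain ⟨γ, ⟨hγΦ, hγ, hγW⟩, hmin⟩ := Set.exists_min_image
    {γ | γ ∈ Φ ∧ IsPos b γ ∧ reflection γ ∉ Subgroup.closure (reflection '' Δ)}
    (fun γ => ∑ i, b.repr γ i) (hΦ.finite.subset fun γ hγ => hγ.1) ⟨β, hβΦ, hβ, hβW⟩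
  obtain ⟨⟨a, haΔ⟩, ha⟩ := exists_inner_pos_of_isPos hγ (fun h => hΦ.nonzero (h ▸ hγΦ))
  rw [hb, real_inner_comm] at ha
  have hsa : reflection a ∈ Subgroup.closure (reflection '' Δ) :=
    Subgroup.subset_closure ⟨a, haΔ, rfl⟩
  have hγa : γ ≠ a := fun h => hγW (h ▸ hsa)
  refine not_lt.2 (hmin (reflection a γ) ⟨reflection_mem hΦ (hΔ.1 haΔ) hγΦ,
    isPos_reflection_of_ne hΦ hΔ hb haΔ hγΦ hγ hγa, fun h => hγW ?_⟩)
    (sum_repr_reflection_lt hb haΔ ha)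
  rw [← reflection_reflection a γ, reflection_reflection_apply_eq]
  exact mul_mem (mul_mem hsa h) hsa

lemma weylGroup_eq_closure (hΦ : IsIrredRootSystem Φ) (hΔ : IsBase Φ Δ) (hb : ∀ a, b a = a) :
    weylGroup Φ = Subgroup.closure (reflection '' Δ) := by
  refine le_antisymm ?_ (Subgroup.closure_mono (reflections_eq Φ ▸ Set.image_mono hΔ.1))
  rw [weylGroup, reflections_eq, Subgroup.closure_le]
  rintro _ ⟨α, hα, rfl⟩
  rcases isPos_or_isPos_neg hΔ hb hα with h | h
  · exact reflection_mem_closure_of_isPos hΦ hΔ hb hα h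
  · exact reflection_neg α ▸ reflection_mem_closure_of_isPos hΦ hΔ hb (neg_mem hΦ hα) h

end Generation

section HighestRoot

variable {Φ : Set V} {Δ : Finset V} {b : Module.Basis Δ ℝ V} {t : V}

lemma inner_highest_basis_nonneg (hΦ : IsIrredRootSystem Φ) (hΔ : IsBase Φ Δ)
    (hb : ∀ a, b a = a) (ht : IsHighestRoot Φ Δ t) (i : Δ) : 0 ≤ ⟪t, b i⟫ := by
  obtain ⟨a, ha⟩ := i
  rw [hb, real_inner_comm]
  -- `t - s_a t` is a nonnegative combination of simple roots, and a multiple of `a`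
  obtain ⟨c, hc⟩ := ht.2 _ (reflection_mem hΦ (hΔ.1 ha) ht.1)
  have hcoord := congrArg (fun v => b.repr v ⟨a, ha⟩) hc
  simp only [reflection_apply, sub_sub_cancel, map_smul, repr_of_mem hb ha, repr_sum_smul hb,
    Finsupp.smul_apply, Finsupp.single_eq_same, smul_eq_mul, mul_one] at hcoord
  have hk : 0 ≤ 2 * ⟪a, t⟫ / ⟪a, a⟫ := hcoord ▸ Nat.cast_nonneg _
  have haa : 0 < ⟪a, a⟫ := real_inner_self_pos.2 fun h => hΦ.nonzero (h ▸ hΔ.1 ha)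
  by_contra! h
  exact absurd hk (not_le.2 (div_neg_of_neg_of_pos (by linarith) haa))

lemma isPos_of_inner_highest_pos (hΦ : IsIrredRootSystem Φ) (hΔ : IsBase Φ Δ)
    (hb : ∀ a, b a = a) (ht : IsHighestRoot Φ Δ t) {γ : V} (hγ : γ ∈ Φ) (h : 0 < ⟪t, γ⟫) :
    IsPos b γ := by
  refine (isPos_or_isPos_neg hΔ hb hγ).resolve_right fun hneg => ?_
  have := inner_nonneg_of_isPos (inner_highest_basis_nonneg hΦ hΔ hb ht) hneg
  rw [inner_neg_right] at this
  linarith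

lemma isPos_mul_mul_reflection_highest_apply (hΦ : IsIrredRootSystem Φ) (hΔ : IsBase Φ Δ)
    (hb : ∀ a, b a = a) (ht : IsHighestRoot Φ Δ t) {w₀ wI : V ≃ₗ[ℝ] V}
    (hw₀ : ∀ β, IsPos b β → IsPos b (-w₀ β))
    (hwI : wI ∈ Subgroup.closure (reflection '' {α | α ∈ Δ ∧ ⟪t, α⟫ = 0}))
    (hwI₀ : ∀ β, IsPos b β → ⟪t, β⟫ = 0 → IsPos b (-wI β)) {β : V} (hβΦ : β ∈ Φ)
    (hβ : IsPos b β) : IsPos b ((w₀ * wI * reflection t) β) := by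
  rcases (inner_nonneg_of_isPos (inner_highest_basis_nonneg hΦ hΔ hb ht) hβ).eq_or_lt with h0 | h
  · have := hw₀ _ (hwI₀ β hβ h0.symm)
    rwa [map_neg, neg_neg, ← reflection_of_inner_eq_zero h0.symm] at this
  · have hγΦ : -reflection t β ∈ Φ := neg_mem hΦ (reflection_mem hΦ ht.1 hβΦ)
    have hwIt : wI t = t :=
      apply_eq_self_of_mem_closure (fun α hα => real_inner_comm α t ▸ hα.2) hwI
    have hpos : 0 < ⟪t, wI (-reflection t β)⟫ := by
      have := inner_map_map_of_mem_closure hwI t (-reflection t β)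
      rw [hwIt] at this
      rwa [this, inner_neg_right, inner_reflection_right, neg_neg]
    have := hw₀ _ (isPos_of_inner_highest_pos hΦ hΔ hb ht
      (apply_mem_of_mem_closure hΦ (fun α hα => hΔ.1 hα.1) hwI hγΦ) hpos)
    rwa [map_neg, map_neg, neg_neg] at this

end HighestRoot

end Weyl

open Weyl in
/-- Let `Ĩ` be the set of simple roots orthogonal to the highest root
`α̃`, `w₀` the longest element of `W` and `w_Ĩ` the longest element of `W_Ĩ`. Then
`w₀ w_Ĩ = w_Ĩ w₀ = s_α̃`, the reflection in the highest root. -/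
theorem longest_mul_longest_parabolic (Φ : Set V) (hΦ : IsIrredRootSystem Φ)
    (Δ : Finset V) (hΔ : IsBase Φ Δ)
    (t : V) (ht : IsHighestRoot Φ Δ t)
    (w₀ : V ≃ₗ[ℝ] V) (hw₀ : w₀ ∈ weylGroup Φ)
    (hw₀max : ∀ w ∈ weylGroup Φ, len Δ w ≤ len Δ w₀)
    (wI : V ≃ₗ[ℝ] V) (hwI : wI ∈ parabolic {α : V | α ∈ Δ ∧ ⟪t, α⟫ = 0})
    (hwImax : ∀ w ∈ parabolic {α : V | α ∈ Δ ∧ ⟪t, α⟫ = 0}, len Δ w ≤ len Δ wI)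
    (s : V ≃ₗ[ℝ] V) (hs : ∀ v, s v = v - (2 * ⟪t, v⟫ / ⟪t, t⟫) • t) :
    w₀ * wI = s ∧ wI * w₀ = s := by
  let b := Module.Basis.mk hΔ.2.1 (by simp [span_eq_top_of_isBase hΦ hΔ])
  have hb : ∀ a, b a = a := Module.Basis.mk_apply _ _
  have hst : s = reflection t := LinearEquiv.ext fun v => by rw [hs, reflection_apply]
  have hsW : s ∈ weylGroup Φ := Subgroup.subset_closure ⟨t, ht.1, hs⟩
  rw [weylGroup_eq_closure hΦ hΔ hb] at hw₀ hw₀max hsW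
  rw [parabolic_eq] at hwI hwImax
  have hIΔ : {α : V | α ∈ Δ ∧ ⟪t, α⟫ = 0} ⊆ Δ := fun α hα => hα.1
  have hw₀neg : ∀ β, IsPos b β → IsPos b (-w₀ β) := fun β hβ =>
    isPos_neg_apply_of_forall_len_le hΦ hΔ hb subset_rfl hw₀ hw₀max hβ fun a _ => a.2
  have hwIneg : ∀ β, IsPos b β → ⟪t, β⟫ = 0 → IsPos b (-wI β) := fun β hβ h0 =>
    isPos_neg_apply_of_forall_len_le hΦ hΔ hb hIΔ hwI hwImax hβ fun a ha =>
      ⟨a.2, hb a ▸ inner_eq_zero_of_repr_ne_zero (inner_highest_basis_nonneg hΦ hΔ hb ht) hβ h0 ha⟩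
  have hone : w₀ * wI * s = 1 :=
    eq_one_of_forall_isPos hΦ hΔ hb
      (mul_mem (mul_mem hw₀ (Subgroup.closure_mono (Set.image_mono hIΔ) hwI)) hsW)
      fun β hβΦ hβ =>
        hst ▸ isPos_mul_mul_reflection_highest_apply hΦ hΔ hb ht hw₀neg hwI hwIneg hβΦ hβ
  have hfst : w₀ * wI = s := by
    rw [← mul_inv_eq_one, hst, reflection_inv, ← hst, hone]
  refine ⟨hfst, ?_⟩
  -- `w_Ĩ` fixes `t`, so it commutes with `s_t`
  calc wI * w₀ = wI * s * wI⁻¹ := by rw [eq_mul_inv_of_mul_eq hfst, mul_assoc]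
    _ = s := by
      rw [hst, ← reflection_conj (inner_map_map_of_mem_closure hwI),
        apply_eq_self_of_mem_closure (fun α hα => real_inner_comm α t ▸ hα.2) hwI]
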